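/- Let S be a symmetric positive definite n×n real matrix, Δ an n×p matrix, and Λ a w×p matrix such that the stacked matrix [Δ; Λ] has rank p (full column rank). Then the (p+w)×(p+w) block matrix J = [[ΔᵀSΔ, −Λᵀ], [Λ, 0]] is invertible, provided Λᵀ has full column rank (i.e., Λ has full row rank). -/

import Mathlib

open Matrix

lemma mulVec_inj_of_full_col_rank {m : Type*} [Fintype m] {k : ℕ}
    (A : Matrix m (Fin k) ℝ) (h : A.rank = k) :
    Function.Injective A.mulVec := by
  rw [show A.mulVec = A.mulVecLin from rfl, ← LinearMap.ker_eq_bot]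
  have h2 := A.mulVecLin.finrank_range_add_finrank_ker
  rw [Matrix.rank] at h
  rw [h, Module.finrank_pi ℝ, Fintype.card_fin] at h2
  have : Module.finrank ℝ (LinearMap.ker A.mulVecLin) = 0 := by omega
  exact Submodule.finrank_eq_zero.mp this

theorem stmt_5 (n p w : ℕ) (S : Matrix (Fin n) (Fin n) ℝ) (hS : S.PosDef)
    (Δ : Matrix (Fin n) (Fin p) ℝ) (Λ : Matrix (Fin w) (Fin p) ℝ)
    (hrank : (Matrix.fromRows Δ Λ).rank = p)
    (hΛ : Λ.rank = w) :
    IsUnit (Matrix.fromBlocks (Δᵀ * S * Δ) (-Λᵀ) Λ (0 : Matrix (Fin w) (Fin w) ℝ)) := by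
  rw [← Matrix.mulVec_injective_iff_isUnit]
  rw [show (Matrix.fromBlocks (Δᵀ * S * Δ) (-Λᵀ) Λ
      (0 : Matrix (Fin w) (Fin w) ℝ)).mulVec
    = (Matrix.fromBlocks (Δᵀ * S * Δ) (-Λᵀ) Λ 0).mulVecLin from rfl,
    ← LinearMap.ker_eq_bot, LinearMap.ker_eq_bot']
  intro v hv
  set f : Fin p → ℝ := v ∘ Sum.inl with hf
  set μ : Fin w → ℝ := v ∘ Sum.inr with hμ
  have hv' : v = Sum.elim f μ := by funext x; cases x <;> rfl
  rw [show (Matrix.fromBlocks (Δᵀ * S * Δ) (-Λᵀ) Λ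
      (0 : Matrix (Fin w) (Fin w) ℝ)).mulVecLin v
    = (Matrix.fromBlocks (Δᵀ * S * Δ) (-Λᵀ) Λ 0) *ᵥ v from rfl, hv',
    Matrix.fromBlocks_mulVec] at hv
  have h1 : (Δᵀ * S * Δ) *ᵥ f + (-Λᵀ) *ᵥ μ = 0 := by
    have := congrArg (· ∘ Sum.inl) hv
    funext i
    have := congrFun this i
    simpa using this
  have h2 : Λ *ᵥ f = 0 := by
    have := congrArg (· ∘ Sum.inr) hv
    funext i
    have := congrFun this i
    simpa using this
  have h1' : (Δᵀ * S * Δ) *ᵥ f = Λᵀ *ᵥ μ := by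
    have := h1
    rw [Matrix.neg_mulVec] at this
    linear_combination (norm := module) this
  -- dot with f
  have hdot : f ⬝ᵥ ((Δᵀ * S * Δ) *ᵥ f) = 0 := by
    rw [h1', Matrix.dotProduct_mulVec, Matrix.vecMul_transpose, h2, zero_dotProduct]
  have e : f ⬝ᵥ ((Δᵀ * S * Δ) *ᵥ f) = (Δ *ᵥ f) ⬝ᵥ (S *ᵥ (Δ *ᵥ f)) := by
    rw [show (Δᵀ * S * Δ) *ᵥ f = Δᵀ *ᵥ (S *ᵥ (Δ *ᵥ f)) by
        rw [← Matrix.mulVec_mulVec, ← Matrix.mulVec_mulVec],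
      Matrix.dotProduct_mulVec, Matrix.vecMul_transpose]
  have hkey : (Δ *ᵥ f) ⬝ᵥ (S *ᵥ (Δ *ᵥ f)) = 0 := by
    rw [← e]; exact hdot
  have hΔf : Δ *ᵥ f = 0 := by
    by_contra hne
    have := hS.dotProduct_mulVec_pos hne
    simp only [RCLike.re_to_real, star_trivial] at this
    rw [hkey] at this
    exact lt_irrefl 0 this
  have hfr : Matrix.fromRows Δ Λ *ᵥ f = 0 := by
    rw [Matrix.fromRows_mulVec, hΔf, h2]
    funext x; cases x <;> rfl
  have hf0 : f = 0 := by
    have hinj := mulVec_inj_of_full_col_rank (Matrix.fromRows Δ Λ) hrank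
    have : Matrix.fromRows Δ Λ *ᵥ f = Matrix.fromRows Δ Λ *ᵥ 0 := by
      rw [hfr, Matrix.mulVec_zero]
    exact hinj this
  have hμ0 : μ = 0 := by
    have hrt : (Λᵀ).rank = w := by rw [Matrix.rank_transpose]; exact hΛ
    have hinj := mulVec_inj_of_full_col_rank Λᵀ hrt
    have hΛμ : Λᵀ *ᵥ μ = 0 := by
      rw [← h1', hf0, Matrix.mulVec_zero]
    have : Λᵀ *ᵥ μ = Λᵀ *ᵥ 0 := by rw [hΛμ, Matrix.mulVec_zero]
    exact hinj this
  rw [hv', hf0, hμ0]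
  funext x; cases x <;> rfl
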